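/- arXiv:2605.09285 — 3 statements merged into one kernel-verified Lean document; each statement's English description precedes it below -/
import Mathlib

section
/- Let W be an m×n real matrix, K0 an n×p matrix, V0 = W K0, K1 an n×q matrix, V1 an m×q matrix, and λ > 0. If the matrix λ K0 K0ᵀ + K1 K1ᵀ is invertible, then Δ = (V1 − W K1) K1ᵀ (λ K0 K0ᵀ + K1 K1ᵀ)⁻¹ is the unique minimizer over all m×n matrices D of the objective f(D) = ‖(W + D) K1 − V1‖_F² + λ ‖(W + D) K0 − V0‖_F². -/
open Matrix Finset

noncomputable def frobNorm {m n : ℕ} (A : Matrix (Fin m) (Fin n) ℝ) : ℝ :=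
  Real.sqrt ((Aᵀ * A).trace)

lemma gnonneg {a b : ℕ} (A : Matrix (Fin a) (Fin b) ℝ) : 0 ≤ (Aᵀ*A).trace := by
  rw [Matrix.trace]
  apply Finset.sum_nonneg
  intro j _
  simp only [Matrix.diag_apply, Matrix.mul_apply, Matrix.transpose_apply]
  exact Finset.sum_nonneg fun i _ => mul_self_nonneg _

lemma gzero {a b : ℕ} (A : Matrix (Fin a) (Fin b) ℝ) (h : (Aᵀ*A).trace = 0) : A = 0 := by
  rw [Matrix.trace] at h
  have h1 : ∀ j ∈ Finset.univ, (Aᵀ*A).diag j = 0 := by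
    rw [← Finset.sum_eq_zero_iff_of_nonneg]
    · exact h
    · intro j _
      simp only [Matrix.diag_apply, Matrix.mul_apply, Matrix.transpose_apply]
      exact Finset.sum_nonneg fun i _ => mul_self_nonneg _
  ext i j
  have := h1 j (Finset.mem_univ j)
  simp only [Matrix.diag_apply, Matrix.mul_apply, Matrix.transpose_apply] at this
  have h2 := (Finset.sum_eq_zero_iff_of_nonneg (fun i _ => mul_self_nonneg (A i j))).1 this i (Finset.mem_univ i)
  simpa using mul_self_eq_zero.mp h2

lemma frob_sq {a b : ℕ} (A : Matrix (Fin a) (Fin b) ℝ) :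
    (frobNorm A) ^ 2 = (Aᵀ*A).trace := Real.sq_sqrt (gnonneg A)

lemma tsymm {a b : ℕ} (X Y : Matrix (Fin a) (Fin b) ℝ) : (Xᵀ*Y).trace = (Yᵀ*X).trace := by
  rw [← Matrix.trace_transpose (Xᵀ*Y)]
  simp [Matrix.transpose_mul]

lemma gexpand {a b : ℕ} (X Y : Matrix (Fin a) (Fin b) ℝ) :
    ((X+Y)ᵀ*(X+Y)).trace = (Xᵀ*X).trace + 2*(Xᵀ*Y).trace + (Yᵀ*Y).trace := by
  simp only [Matrix.transpose_add, Matrix.add_mul, Matrix.mul_add, Matrix.trace_add]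
  rw [tsymm Y X]; ring

lemma tcross {a b c : ℕ} (X : Matrix (Fin a) (Fin b) ℝ) (E : Matrix (Fin a) (Fin c) ℝ)
    (K : Matrix (Fin c) (Fin b) ℝ) : (Xᵀ*(E*K)).trace = (X*(Kᵀ*Eᵀ)).trace := by
  rw [← Matrix.trace_transpose (Xᵀ*(E*K))]
  simp only [Matrix.transpose_mul, Matrix.transpose_transpose]
  rw [Matrix.trace_mul_comm]

lemma crosszero {m n p q : ℕ}
    (K0 : Matrix (Fin n) (Fin p) ℝ) (K1 : Matrix (Fin n) (Fin q) ℝ)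
    (R : Matrix (Fin m) (Fin q) ℝ) (Δ E : Matrix (Fin m) (Fin n) ℝ) (lam : ℝ)
    (hkey : Δ * (lam • (K0 * K0ᵀ) + K1 * K1ᵀ) = R * K1ᵀ) :
    ((Δ*K1 - R)*(K1ᵀ*Eᵀ)).trace + lam * ((Δ*K0)*(K0ᵀ*Eᵀ)).trace = 0 := by
  have hs : lam * ((Δ*K0)*(K0ᵀ*Eᵀ)).trace = (lam • ((Δ*K0)*(K0ᵀ*Eᵀ))).trace := by
    rw [Matrix.trace_smul]; rfl
  rw [hs, ← Matrix.trace_add]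
  have h : (Δ*K1 - R)*(K1ᵀ*Eᵀ) + lam • ((Δ*K0)*(K0ᵀ*Eᵀ))
      = (Δ * (lam • (K0 * K0ᵀ) + K1 * K1ᵀ) - R * K1ᵀ) * Eᵀ := by
    simp only [Matrix.sub_mul, Matrix.add_mul, Matrix.mul_add, Matrix.smul_mul,
      Matrix.mul_smul, Matrix.mul_assoc]
    abel
  rw [h, hkey, sub_self, Matrix.zero_mul, Matrix.trace_zero]

/-- Main decomposition identity. -/
lemma main_id {m n p q : ℕ}
    (K0 : Matrix (Fin n) (Fin p) ℝ) (K1 : Matrix (Fin n) (Fin q) ℝ)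
    (R : Matrix (Fin m) (Fin q) ℝ) (Δ : Matrix (Fin m) (Fin n) ℝ) (lam : ℝ)
    (hkey : Δ * (lam • (K0 * K0ᵀ) + K1 * K1ᵀ) = R * K1ᵀ)
    (D : Matrix (Fin m) (Fin n) ℝ) :
    ((D*K1 - R)ᵀ*(D*K1 - R)).trace + lam * ((D*K0)ᵀ*(D*K0)).trace
      = ((Δ*K1 - R)ᵀ*(Δ*K1 - R)).trace + lam * ((Δ*K0)ᵀ*(Δ*K0)).trace
        + (((D-Δ)*K1)ᵀ*((D-Δ)*K1)).trace + lam * ((((D-Δ)*K0))ᵀ*((D-Δ)*K0)).trace := by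
  set E := D - Δ with hE
  have hD1 : D*K1 - R = (Δ*K1 - R) + E*K1 := by
    rw [hE]; simp only [Matrix.sub_mul]; abel
  have hD0 : D*K0 = Δ*K0 + E*K0 := by
    rw [hE]; simp only [Matrix.sub_mul]; abel
  rw [hD1, hD0, gexpand, gexpand, tcross (Δ*K1 - R) E K1, tcross (Δ*K0) E K0]
  have hc := crosszero K0 K1 R Δ E lam hkey
  nlinarith [hc]

/-- The regularized least-squares editing objective has the stated closed-form
unique minimizer. -/
theorem stmt0 {m n p q : ℕ}
    (W : Matrix (Fin m) (Fin n) ℝ) (K0 : Matrix (Fin n) (Fin p) ℝ)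
    (K1 : Matrix (Fin n) (Fin q) ℝ) (V1 : Matrix (Fin m) (Fin q) ℝ)
    (lam : ℝ) (hlam : 0 < lam)
    (hinv : IsUnit (lam • (K0 * K0ᵀ) + K1 * K1ᵀ)) :
    let V0 := W * K0
    let f : Matrix (Fin m) (Fin n) ℝ → ℝ := fun D =>
      (frobNorm ((W + D) * K1 - V1)) ^ 2 + lam * (frobNorm ((W + D) * K0 - V0)) ^ 2
    let Δ := (V1 - W * K1) * K1ᵀ * (lam • (K0 * K0ᵀ) + K1 * K1ᵀ)⁻¹
    (∀ D, f Δ ≤ f D) ∧ (∀ D, f D = f Δ → D = Δ) := by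
  intro V0 f Δ
  set A := lam • (K0 * K0ᵀ) + K1 * K1ᵀ with hA
  set R := V1 - W * K1 with hR
  have hdet : IsUnit A.det := (Matrix.isUnit_iff_isUnit_det A).1 hinv
  have hAinv : A⁻¹ * A = 1 := Matrix.nonsing_inv_mul A hdet
  have hAinv' : A * A⁻¹ = 1 := Matrix.mul_nonsing_inv A hdet
  have hkey : Δ * A = R * K1ᵀ := by
    show R * K1ᵀ * A⁻¹ * A = R * K1ᵀ
    rw [Matrix.mul_assoc, hAinv, Matrix.mul_one]
  -- rewrite f in terms of traces
  have hf : ∀ D, f D = ((D*K1 - R)ᵀ*(D*K1 - R)).trace + lam * ((D*K0)ᵀ*(D*K0)).trace := by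
    intro D
    have e1 : (W + D) * K1 - V1 = D*K1 - R := by
      rw [hR, Matrix.add_mul]; abel
    have e0 : (W + D) * K0 - V0 = D*K0 := by
      show (W + D) * K0 - W * K0 = D*K0
      rw [Matrix.add_mul]; abel
    show (frobNorm ((W + D) * K1 - V1)) ^ 2 + lam * (frobNorm ((W + D) * K0 - V0)) ^ 2 = _
    rw [e1, e0, frob_sq, frob_sq]
  constructor
  · intro D
    rw [hf D, hf Δ, main_id K0 K1 R Δ lam hkey D]
    have h1 := gnonneg ((D-Δ)*K1)
    have h2 := gnonneg ((D-Δ)*K0)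
    nlinarith
  · intro D hD
    rw [hf D, hf Δ, main_id K0 K1 R Δ lam hkey D] at hD
    have h1 := gnonneg ((D-Δ)*K1)
    have h2 := gnonneg ((D-Δ)*K0)
    have hz1 : (((D-Δ)*K1)ᵀ*((D-Δ)*K1)).trace = 0 := by nlinarith
    have hz2 : (((D-Δ)*K0)ᵀ*((D-Δ)*K0)).trace = 0 := by nlinarith
    have hK1 : (D-Δ)*K1 = 0 := gzero _ hz1
    have hK0 : (D-Δ)*K0 = 0 := gzero _ hz2
    have hEA : (D-Δ) * A = 0 := by
      rw [hA, Matrix.mul_add, Matrix.mul_smul, ← Matrix.mul_assoc, ← Matrix.mul_assoc,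
        hK1, hK0, Matrix.zero_mul, Matrix.zero_mul, smul_zero, add_zero]
    have : (D-Δ) = 0 := by
      have := congrArg (· * A⁻¹) hEA
      simpa [Matrix.mul_assoc, hAinv'] using this
    have := sub_eq_zero.mp this
    exact this
end

section
/- Let G ≻ 0 be symmetric positive definite, k ∈ ℝⁿ, r ∈ ℝᵐ, and λ ≥ 0. Define Δ(λ) = r kᵀ (k kᵀ + G + λ I)⁻¹. Then ‖Δ(λ)‖_F is non-increasing in λ; i.e., for 0 ≤ λ₁ ≤ λ₂, ‖Δ(λ₂)‖_F ≤ ‖Δ(λ₁)‖_F. -/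
open Matrix

lemma vecMulVec_mul_eq {m n : ℕ} (r : Fin m → ℝ) (k : Fin n → ℝ)
    (M : Matrix (Fin n) (Fin n) ℝ) :
    vecMulVec r k * M = vecMulVec r (Mᵀ *ᵥ k) := by
  ext i j
  simp [mul_apply, vecMulVec_apply, mulVec, dotProduct, Finset.mul_sum, mul_comm, mul_assoc,
    mul_left_comm]

lemma frobNorm_vecMulVec {m n : ℕ} (u : Fin m → ℝ) (v : Fin n → ℝ) :
    frobNorm (vecMulVec u v) = Real.sqrt ((u ⬝ᵥ u) * (v ⬝ᵥ v)) := by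
  unfold frobNorm
  congr 1
  rw [trace, dotProduct, dotProduct, Finset.sum_mul_sum]
  simp only [diag, mul_apply, transpose_apply, vecMulVec_apply]
  rw [Finset.sum_comm]
  refine Finset.sum_congr rfl fun i _ => Finset.sum_congr rfl fun j _ => by ring

lemma posSemidef_vecMulVec {n : ℕ} (k : Fin n → ℝ) :
    (vecMulVec k k).PosSemidef := by
  rw [posSemidef_iff_dotProduct_mulVec]
  constructor
  · ext i j
    simp [vecMulVec_apply, conjTranspose_apply, mul_comm]
  · intro x
    have : star x ⬝ᵥ (vecMulVec k k *ᵥ x) = (k ⬝ᵥ x) * (k ⬝ᵥ x) := by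
      simp [dotProduct, mulVec, vecMulVec_apply, Finset.sum_mul, Finset.mul_sum,
        mul_comm, mul_assoc, mul_left_comm]
    rw [this]
    exact mul_self_nonneg _
  
lemma posSemidef_smul_one {n : ℕ} {c : ℝ} (hc : 0 ≤ c) :
    (c • (1 : Matrix (Fin n) (Fin n) ℝ)).PosSemidef := by
  rw [posSemidef_iff_dotProduct_mulVec]
  constructor
  · ext i j
    simp [conjTranspose_apply, one_apply]
    split <;> simp_all [eq_comm]
  · intro x
    simp only [smul_mulVec, one_mulVec, dotProduct_smul]
    have : star x ⬝ᵥ x = x ⬝ᵥ x := by simp [dotProduct]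
    rw [smul_eq_mul, this]
    exact mul_nonneg hc (Finset.sum_nonneg fun i _ => mul_self_nonneg _)

lemma dot_self_nonneg {n : ℕ} (v : Fin n → ℝ) : 0 ≤ v ⬝ᵥ v :=
  Finset.sum_nonneg fun i _ => mul_self_nonneg _

/-- Key inequality : if `A₁` is posdef and `c ≥ 0`, then
`‖(A₁+cI)⁻¹k‖ ≤ ‖A₁⁻¹k‖`. -/
lemma inv_mulVec_sq_le {n : ℕ} {A₁ : Matrix (Fin n) (Fin n) ℝ} (hA₁ : A₁.PosDef)
    {c : ℝ} (hc : 0 ≤ c) (k : Fin n → ℝ) :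
    ((A₁ + c • 1)⁻¹ *ᵥ k) ⬝ᵥ ((A₁ + c • 1)⁻¹ *ᵥ k) ≤ (A₁⁻¹ *ᵥ k) ⬝ᵥ (A₁⁻¹ *ᵥ k) := by
  set A₂ := A₁ + c • (1 : Matrix (Fin n) (Fin n) ℝ) with hA₂def
  have hA₂ : A₂.PosDef := hA₁.add_posSemidef (posSemidef_smul_one hc)
  have hd₁ : IsUnit A₁.det := hA₁.det_pos.ne'.isUnit
  have hd₂ : IsUnit A₂.det := hA₂.det_pos.ne'.isUnit
  set x := A₁⁻¹ *ᵥ k with hx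
  set y := A₂⁻¹ *ᵥ k with hy
  have h1 : A₁ *ᵥ x = k := by
    rw [hx, mulVec_mulVec, mul_nonsing_inv _ hd₁, one_mulVec]
  have h2 : A₂ *ᵥ y = k := by
    rw [hy, mulVec_mulVec, mul_nonsing_inv _ hd₂, one_mulVec]
  have h3 : A₁ *ᵥ x = A₁ *ᵥ y + c • y := by
    rw [h1, ← h2, hA₂def, add_mulVec, smul_mulVec, one_mulVec]
  set z := A₁⁻¹ *ᵥ y with hz
  have h4 : x = y + c • z := by
    have := congrArg (fun v => A₁⁻¹ *ᵥ v) h3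
    simp only [mulVec_add, mulVec_smul, mulVec_mulVec,
      nonsing_inv_mul _ hd₁, one_mulVec] at this
    exact this
  have hyz : 0 ≤ y ⬝ᵥ z := by
    have := hA₁.inv.posSemidef.dotProduct_mulVec_nonneg y
    simpa [hz, dotProduct] using this
  have hexp : x ⬝ᵥ x = y ⬝ᵥ y + (2 * c) * (y ⬝ᵥ z) + (c * c) * (z ⬝ᵥ z) := by
    rw [h4]
    simp only [dotProduct_add, add_dotProduct, smul_dotProduct, dotProduct_smul, smul_eq_mul]
    rw [dotProduct_comm z y]
    ring
  rw [hexp]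
  nlinarith [dot_self_nonneg z, mul_nonneg hc hyz]

/-- Increasing the ridge regularization strength shrinks the per-step
rank-one weight perturbation `Δ(λ) = r kᵀ (k kᵀ + G + λ I)⁻¹`. -/
theorem stmt17 {m n : ℕ}
    (G : Matrix (Fin n) (Fin n) ℝ) (hG : G.PosDef)
    (k : Fin n → ℝ) (r : Fin m → ℝ)
    (lam₁ lam₂ : ℝ) (h1 : 0 ≤ lam₁) (h12 : lam₁ ≤ lam₂) :
    frobNorm (vecMulVec r k * (vecMulVec k k + G + lam₂ • (1 : Matrix (Fin n) (Fin n) ℝ))⁻¹)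
      ≤ frobNorm (vecMulVec r k * (vecMulVec k k + G + lam₁ • (1 : Matrix (Fin n) (Fin n) ℝ))⁻¹) := by
  set A₁ := vecMulVec k k + G + lam₁ • (1 : Matrix (Fin n) (Fin n) ℝ) with hA₁def
  set A₂ := vecMulVec k k + G + lam₂ • (1 : Matrix (Fin n) (Fin n) ℝ) with hA₂def
  have hA₁ : A₁.PosDef :=
    (Matrix.PosDef.posSemidef_add (posSemidef_vecMulVec k) hG).add_posSemidef
      (posSemidef_smul_one h1)
  have hA2eq : A₂ = A₁ + (lam₂ - lam₁) • 1 := by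
    rw [hA₁def, hA₂def, sub_smul]
    abel
  have hA₂ : A₂.PosDef := by
    rw [hA2eq]
    exact hA₁.add_posSemidef (posSemidef_smul_one (by linarith))
  have hsym : ∀ (A : Matrix (Fin n) (Fin n) ℝ), A.PosDef → (A⁻¹)ᵀ = A⁻¹ := by
    intro A hA
    have := hA.inv.isHermitian
    simpa [IsHermitian, conjTranspose_eq_transpose_of_trivial] using this
  rw [vecMulVec_mul_eq, vecMulVec_mul_eq, frobNorm_vecMulVec, frobNorm_vecMulVec,
    hsym _ hA₁, hsym _ hA₂]
  apply Real.sqrt_le_sqrt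
  apply mul_le_mul_of_nonneg_left _ (dot_self_nonneg r)
  rw [hA2eq]
  exact inv_mulVec_sq_le hA₁ (by linarith) k
end

section
/- Let K₀ be an n×p real matrix, P an n×n matrix with P K₀ = 0, and K₁ an n×q matrix such that K₁ K₁ᵀ P + λ₂ I is invertible for λ₂ > 0. Then the AlphaEdit update Δ = R₁ K₁ᵀ P (λ₂ I + K₁ K₁ᵀ P)⁻¹ satisfies Δ K₀ = 0 provided P commutes with (λ₂ I + K₁ K₁ᵀ P)⁻¹ applied on the right in the sense that K₁ᵀ P (λ₂ I + K₁ K₁ᵀ P)⁻¹ K₀ = 0; in particular, when P is the orthogonal projector with P K₀ = 0 and P is symmetric idempotent, one has K₁ᵀ P (λ₂ I + K₁ K₁ᵀ P)⁻¹ = K₁ᵀ (λ₂ I + P K₁ K₁ᵀ P)⁻¹ P, hence Δ K₀ = 0. -/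
open Matrix

/-- With an exact null-space projector (`P² = P = Pᵀ`, `P K₀ = 0`), the AlphaEdit
closed-form update `Δ = R₁ K₁ᵀ P (λ₂ I + K₁ K₁ᵀ P)⁻¹` induces zero knowledge
leakage, via the identity transferring `P` through the inverse. -/
theorem stmt18 {m n p q : ℕ}
    (K0 : Matrix (Fin n) (Fin p) ℝ) (K1 : Matrix (Fin n) (Fin q) ℝ)
    (R1 : Matrix (Fin m) (Fin q) ℝ)
    (P : Matrix (Fin n) (Fin n) ℝ)
    (hP2 : P * P = P) (hPt : Pᵀ = P) (hPK0 : P * K0 = 0)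
    (lam₂ : ℝ) (hlam : 0 < lam₂)
    (hinv : IsUnit (lam₂ • (1 : Matrix (Fin n) (Fin n) ℝ) + K1 * K1ᵀ * P)) :
    K1ᵀ * P * (lam₂ • (1 : Matrix (Fin n) (Fin n) ℝ) + K1 * K1ᵀ * P)⁻¹
      = K1ᵀ * (lam₂ • (1 : Matrix (Fin n) (Fin n) ℝ) + P * (K1 * K1ᵀ) * P)⁻¹ * P ∧
    R1 * K1ᵀ * P * (lam₂ • (1 : Matrix (Fin n) (Fin n) ℝ) + K1 * K1ᵀ * P)⁻¹ * K0 = 0 := by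
  set A : Matrix (Fin n) (Fin n) ℝ := lam₂ • 1 + K1 * K1ᵀ * P with hA
  set B : Matrix (Fin n) (Fin n) ℝ := lam₂ • 1 + P * (K1 * K1ᵀ) * P with hB
  -- B is positive definite, hence invertible
  have hBpd : B.PosDef := by
    have h1 : (lam₂ • (1 : Matrix (Fin n) (Fin n) ℝ)).PosDef := by
      rw [smul_one_eq_diagonal]
      exact Matrix.posDef_diagonal_iff.mpr fun _ => hlam
    have h2 : (P * (K1 * K1ᵀ) * P).PosSemidef := by
      have : P * (K1 * K1ᵀ) * P = (K1ᵀ * P)ᴴ * (K1ᵀ * P) := by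
        have hmapP : P.map ⇑(starRingEnd ℝ) = P := by ext i j; simp
        have hmapK : K1.map ⇑(starRingEnd ℝ) = K1 := by ext i j; simp
        simp [Matrix.conjTranspose_mul, Matrix.conjTranspose, hPt, Matrix.mul_assoc,
          hmapP, hmapK]
      rw [this]
      exact Matrix.posSemidef_conjTranspose_mul_self _
    exact h1.add_posSemidef h2
  have hBu : IsUnit B := hBpd.isUnit
  -- key commutation: B * P = P * A
  have hcomm : B * P = P * A := by
    rw [hA, hB]
    rw [add_mul, mul_add]
    congr 1
    · rw [smul_mul_assoc, mul_smul_comm, one_mul, mul_one]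
    · simp only [Matrix.mul_assoc, hP2]
  -- transfer through inverses: P * A⁻¹ = B⁻¹ * P
  have hPAinv : P * A⁻¹ = B⁻¹ * P := by
    have hAdet : IsUnit A.det := (Matrix.isUnit_iff_isUnit_det A).mp hinv
    have hBdet : IsUnit B.det := (Matrix.isUnit_iff_isUnit_det B).mp hBu
    calc P * A⁻¹ = B⁻¹ * (B * P) * A⁻¹ := by
          rw [← Matrix.mul_assoc, Matrix.nonsing_inv_mul B hBdet, one_mul]
      _ = B⁻¹ * (P * A) * A⁻¹ := by rw [hcomm]
      _ = B⁻¹ * P := by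
          rw [Matrix.mul_assoc B⁻¹, Matrix.mul_assoc, Matrix.mul_nonsing_inv A hAdet,
            mul_one]
  have h1 : K1ᵀ * P * A⁻¹ = K1ᵀ * B⁻¹ * P := by
    rw [Matrix.mul_assoc, hPAinv, ← Matrix.mul_assoc]
  refine ⟨h1, ?_⟩
  have : R1 * K1ᵀ * P * A⁻¹ * K0 = R1 * (K1ᵀ * B⁻¹) * (P * K0) := by
    rw [Matrix.mul_assoc (R1 * K1ᵀ), hPAinv]
    simp only [Matrix.mul_assoc]
  rw [this, hPK0, Matrix.mul_zero]
end
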